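/- For every real q > −1 and every convex body K ⊂ ℝⁿ, the chord integral I_q(K) is finite. -/

import Mathlib

open MeasureTheory Filter Topology Asymptotics
open scoped RealInnerProductSpace ENNReal NNReal

noncomputable section

namespace ChordDoc

/-- Euclidean `n`-space `ℝⁿ`. -/
abbrev Euc (n : ℕ) := EuclideanSpace ℝ (Fin n)

/-- The unit sphere `S^{n-1}` in `ℝⁿ`. -/
def sph (n : ℕ) : Set (Euc n) := Metric.sphere 0 1

/-- `ω_k`, the volume of the unit ball in `ℝᵏ`. -/
def ballVol (k : ℕ) : ℝ :=
  (volume (Metric.ball (0 : EuclideanSpace ℝ (Fin k)) 1)).toReal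

variable {n : ℕ}

/-- The extended radial function `ρ_{K,z}(u) = sup {t : z + t • u ∈ K}` (`0` if no such `t`). -/
def radial (K : Set (Euc n)) (z u : Euc n) : ℝ := sSup {t : ℝ | z + t • u ∈ K}

/-- `S_z^+ = {u ∈ S^{n-1} : ρ_{K,z}(u) > 0}`. -/
def sPlus (K : Set (Euc n)) (z : Euc n) : Set (Euc n) := {u ∈ sph n | 0 < radial K z u}

/-- The `q`-th dual quermassintegral `Ṽ_q(K, z)`. -/
def dualQ (K : Set (Euc n)) (q : ℝ) (z : Euc n) : ℝ :=
  (1 / (n : ℝ)) * ∫ u in sPlus K z, radial K z u ^ q ∂μH[(n : ℝ) - 1]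

/-- `v` is an outer unit normal of `K` at `z`. -/
def IsOuterNormal (K : Set (Euc n)) (z v : Euc n) : Prop :=
  ‖v‖ = 1 ∧ ∀ x ∈ K, ⟪x, v⟫ ≤ ⟪z, v⟫

/-- `∂'K`, the set of boundary points of `K` with a unique outer unit normal. -/
def regBdry (K : Set (Euc n)) : Set (Euc n) :=
  {z ∈ frontier K | ∃! v, IsOuterNormal K z v}

open scoped Classical in
/-- The Gauss map `ν_K` (junk value `0` off `∂'K`). -/
def gauss (K : Set (Euc n)) (z : Euc n) : Euc n :=
  if h : ∃! v, IsOuterNormal K z v then h.exists.choose else 0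

/-- `ν_K^{-1}(η)`. -/
def gaussPre (K : Set (Euc n)) (η : Set (Euc n)) : Set (Euc n) :=
  {z ∈ regBdry K | gauss K z ∈ η}

/-- The chord measure `F_q(K, η)`. -/
def chordF (K : Set (Euc n)) (q : ℝ) (η : Set (Euc n)) : ℝ :=
  (2 * q / ballVol n) * ∫ z in gaussPre K η, dualQ K (q - 1) z ∂μH[(n : ℝ) - 1]

/-- The cone-chord measure `G_q(K, η)`. -/
def coneChordG (K : Set (Euc n)) (q : ℝ) (η : Set (Euc n)) : ℝ :=
  (2 * q / (((n : ℝ) + q - 1) * ballVol n)) *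
    ∫ z in gaussPre K η, ⟪z, gauss K z⟫ * dualQ K (q - 1) z ∂μH[(n : ℝ) - 1]

open scoped Classical in
/-- The parallel X-ray `X_K(x, u)`: the length of the chord `K ∩ (x + ℝu)`. -/
def xray (K : Set (Euc n)) (x u : Euc n) : ℝ :=
  if {t : ℝ | x + t • u ∈ K}.Nonempty then
    sSup {t : ℝ | x + t • u ∈ K} - sInf {t : ℝ | x + t • u ∈ K}
  else 0

/-- `a^q`, interpreted as `0` when `a = 0` (also for `q ≤ 0`). -/
def cpow (a q : ℝ) : ℝ := if a = 0 then 0 else a ^ q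

/-- The orthogonal projection `K | u^⊥` of `K` onto the hyperplane `u^⊥`. -/
def projHyper (u : Euc n) (K : Set (Euc n)) : Set (Euc n) :=
  (fun x => (Submodule.orthogonalProjectionOnto (Submodule.span ℝ {u})ᗮ x : Euc n)) '' K

/-- The chord integral `I_q(K)`. -/
def chordI (K : Set (Euc n)) (q : ℝ) : ℝ :=
  (1 / ((n : ℝ) * ballVol n)) *
    ∫ u in sph n, (∫ x in projHyper u K, cpow (xray K x u) q ∂μH[(n : ℝ) - 1])
      ∂μH[(n : ℝ) - 1]

/-- The support function `h_K`. -/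
def suppFn (K : Set (Euc n)) (v : Euc n) : ℝ := sSup ((fun x => ⟪x, v⟫) '' K)

/-- The Wulff shape `[h]` of a function `h` on the sphere. -/
def wulff (n : ℕ) (h : Euc n → ℝ) : Set (Euc n) := {x | ∀ v ∈ sph n, ⟪x, v⟫ ≤ h v}

/-- `K` is a convex body: compact, convex, with nonempty interior. -/
def IsConvexBody (K : Set (Euc n)) : Prop :=
  IsCompact K ∧ Convex ℝ K ∧ (interior K).Nonempty

end ChordDoc

/-!
For `q ≥ 0` the integrand is bounded by `(diam K) ^ q`, so only `-1 < q < 0` needs an argument.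
Fix a direction `u`, put `C = K | u^⊥`, and let `x₀ ∈ C` be the projection of the centre of a ball
of radius `r` inside `K`. Since `K` is convex, the X-ray `X(·, u)` is concave on `C`, so it is at
least `2rt` on the homothetic copy `x₀ + (1 - t)(C - x₀)`, whose complement in `C` has
`(n-1)`-measure at most `(n - 1) t |C|`. Summing over `t = 2^{-(j+1)}` bounds `∫_C X^q` by `|C|`
times a constant multiple of `∑ 2^{-j(q+1)}`, which converges exactly because `q > -1`.
This is uniform in `u`, since `|C|` is at most the measure of an `(n-1)`-ball of radius
`R ≥ max ‖K‖`, and the sphere has finite `(n-1)`-dimensional Hausdorff measure: it is covered by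
finitely many caps, each the image of a bounded piece of a hyperplane under the `2`-Lipschitz
normalisation `y ↦ y / ‖y‖`.
-/

open Metric Module

theorem lipschitzOnWith_inv_norm_smul {F : Type*} [NormedAddCommGroup F] [NormedSpace ℝ F] :
    LipschitzOnWith 2 (fun x : F => ‖x‖⁻¹ • x) {x | 1 ≤ ‖x‖} := by
  refine LipschitzOnWith.of_dist_le_mul fun x (hx : 1 ≤ ‖x‖) y (hy : 1 ≤ ‖y‖) => ?_
  have hy0 : ‖y‖ ≠ 0 := (one_pos.trans_le hy).ne'
  have split : ‖x‖⁻¹ • x - ‖y‖⁻¹ • y = ‖x‖⁻¹ • ((x - y) + (‖y‖ - ‖x‖) • (‖y‖⁻¹ • y)) := by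
    have hx0 : ‖x‖ ≠ 0 := (one_pos.trans_le hx).ne'
    have coeff : ‖x‖⁻¹ * (‖y‖ - ‖x‖) * ‖y‖⁻¹ = ‖x‖⁻¹ - ‖y‖⁻¹ := by field_simp
    rw [smul_add, smul_smul, smul_smul, coeff]
    module
  rw [dist_eq_norm, dist_eq_norm, split, NNReal.coe_ofNat, norm_smul, norm_inv, norm_norm]
  calc ‖x‖⁻¹ * ‖x - y + (‖y‖ - ‖x‖) • ‖y‖⁻¹ • y‖ ≤ 1 * (‖x - y‖ + ‖x - y‖) := by
        gcongr
        · exact inv_le_one_of_one_le₀ hx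
        · refine (norm_add_le _ _).trans (add_le_add le_rfl ?_)
          rw [norm_smul, norm_smul, norm_inv, norm_norm, inv_mul_cancel₀ hy0, mul_one,
            Real.norm_eq_abs, abs_sub_comm]
          exact abs_norm_sub_norm_le x y
    _ = 2 * ‖x - y‖ := by ring

section InnerProductSpace

variable {E : Type*} [NormedAddCommGroup E] [InnerProductSpace ℝ E]

theorem lipschitzOnWith_normalize_const_add (v : E) (hv : ‖v‖ = 1) :
    LipschitzOnWith 2 (fun w : E => ‖v + w‖⁻¹ • (v + w)) (ℝ ∙ v)ᗮ := by
  have hmaps : Set.MapsTo (v + ·) ((ℝ ∙ v)ᗮ : Set E) {x | 1 ≤ ‖x‖} := fun w hw => by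
    rw [SetLike.mem_coe, Submodule.mem_orthogonal_singleton_iff_inner_right] at hw
    have := real_inner_le_norm (v + w) v
    rwa [inner_add_left, real_inner_self_eq_norm_sq, hv, real_inner_comm, hw, mul_one,
      one_pow, add_zero] at this
  have h := lipschitzOnWith_inv_norm_smul.comp
    (IsometryEquiv.addLeft v).isometry.lipschitz.lipschitzOnWith hmaps
  rw [mul_one] at h
  exact h

theorem sphere_inter_cap_subset (v : E) (hv : ‖v‖ = 1) :
    sphere (0 : E) 1 ∩ {x | 1 / 2 < ⟪x, v⟫} ⊆
      (fun w : E => ‖v + w‖⁻¹ • (v + w)) '' ((ℝ ∙ v)ᗮ ∩ closedBall 0 3) := by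
  rintro x ⟨hx, hc : 1 / 2 < ⟪x, v⟫⟩
  rw [mem_sphere_zero_iff_norm] at hx
  set c := ⟪x, v⟫
  have hc0 : 0 < c := by linarith
  refine ⟨c⁻¹ • x - v, ⟨?_, ?_⟩, ?_⟩
  · rw [SetLike.mem_coe, Submodule.mem_orthogonal_singleton_iff_inner_right, inner_sub_right,
      real_inner_smul_right, real_inner_comm, real_inner_self_eq_norm_sq, hv,
      inv_mul_cancel₀ hc0.ne']
    norm_num
  · rw [mem_closedBall_zero_iff]
    calc ‖c⁻¹ • x - v‖ ≤ ‖c⁻¹ • x‖ + ‖v‖ := norm_sub_le _ _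
      _ = c⁻¹ + 1 := by rw [norm_smul, hx, hv, Real.norm_of_nonneg (inv_nonneg.2 hc0.le), mul_one]
      _ ≤ 3 := by linarith [(inv_lt_comm₀ hc0 two_pos).2 (by linarith : 2⁻¹ < c)]
  · simp only [add_sub_cancel, norm_smul, hx, Real.norm_of_nonneg (inv_nonneg.2 hc0.le), mul_one,
      inv_inv, smul_smul, mul_inv_cancel₀ hc0.ne', one_smul]

variable [FiniteDimensional ℝ E] [MeasurableSpace E] [BorelSpace E]

theorem hausdorffMeasure_le_of_subset_submodule (W : Submodule ℝ E) {k : ℕ}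
    (hk : finrank ℝ W = k) {s : Set E} (hsW : s ⊆ W) {R : ℝ} (hsR : s ⊆ closedBall 0 R) :
    μH[k] s ≤ μH[k] (closedBall (0 : EuclideanSpace ℝ (Fin k)) R) := by
  let e := ((stdOrthonormalBasis ℝ W).reindex (finCongr hk)).repr
  obtain ⟨s', rfl⟩ : ∃ s' : Set W, (↑) '' s' = s :=
    ⟨(↑) ⁻¹' s, Set.image_preimage_eq_of_subset (by simpa using hsW)⟩
  rw [isometry_subtype_coe.hausdorffMeasure_image (Or.inl k.cast_nonneg),
    ← e.isometry.hausdorffMeasure_image (Or.inl k.cast_nonneg)]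
  refine measure_mono ?_
  rintro _ ⟨y, hy, rfl⟩
  simpa [e] using hsR ⟨y, hy, rfl⟩

theorem hausdorffMeasure_sphere_lt_top {d : ℕ} (hd : finrank ℝ E = d + 1) :
    μH[d] (sphere (0 : E) 1) < ∞ := by
  have : Fact (finrank ℝ E = d + 1) := ⟨hd⟩
  let cap : sphere (0 : E) 1 → Set E := fun v => {x | 1 / 2 < ⟪x, (v : E)⟫}
  have hcover : sphere (0 : E) 1 ⊆ ⋃ v, cap v := fun x hx => Set.mem_iUnion.2 ⟨⟨x, hx⟩, by
    simp only [cap, Set.mem_ofPred_eq, real_inner_self_eq_norm_sq, mem_sphere_zero_iff_norm.1 hx]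
    norm_num⟩
  obtain ⟨t, ht⟩ := (isCompact_sphere (0 : E) 1).elim_finite_subcover cap
    (fun v => isOpen_lt continuous_const (continuous_id.inner continuous_const)) hcover
  have hcap : ∀ v : sphere (0 : E) 1, μH[d] (sphere 0 1 ∩ cap v) < ∞ := fun ⟨v, hv'⟩ => by
    have hv : ‖v‖ = 1 := mem_sphere_zero_iff_norm.1 hv'
    have hball := hausdorffMeasure_le_of_subset_submodule (ℝ ∙ v)ᗮ
      (Submodule.finrank_orthogonal_span_singleton (n := d)
        (ne_zero_of_norm_ne_zero (hv.trans_ne one_ne_zero)))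
      Set.inter_subset_left (R := 3) Set.inter_subset_right
    calc μH[d] (sphere 0 1 ∩ cap ⟨v, hv'⟩)
        ≤ 2 ^ (d : ℝ) * μH[d] ((ℝ ∙ v)ᗮ ∩ closedBall (0 : E) 3) :=
          (measure_mono (sphere_inter_cap_subset v hv)).trans
            ((lipschitzOnWith_normalize_const_add v hv).mono
              Set.inter_subset_left |>.hausdorffMeasure_image_le d.cast_nonneg)
      _ < ∞ := ENNReal.mul_lt_top (by simp) (hball.trans_lt measure_closedBall_lt_top)
  calc μH[d] (sphere (0 : E) 1) ≤ μH[d] (⋃ v ∈ t, sphere 0 1 ∩ cap v) :=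
        measure_mono fun x hx => by
          obtain ⟨v, hvt, hxv⟩ := Set.mem_iUnion₂.1 (ht hx)
          exact Set.mem_iUnion₂.2 ⟨v, hvt, hx, hxv⟩
    _ ≤ ∑ v ∈ t, μH[d] (sphere 0 1 ∩ cap v) := measure_biUnion_finset_le t _
    _ < ∞ := ENNReal.sum_lt_top.2 fun v _ => hcap v

end InnerProductSpace

theorem hausdorffMeasure_diff_homothety_le {E : Type*} [NormedAddCommGroup E] [NormedSpace ℝ E]
    [MeasurableSpace E] [BorelSpace E] {C : Set E} (hC : IsCompact C) (hCv : Convex ℝ C)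
    {x₀ : E} (hx₀ : x₀ ∈ C) {d : ℕ} (hfin : μH[d] C ≠ ∞) {t : ℝ} (ht0 : 0 ≤ t) (ht1 : t < 1) :
    μH[d] (C \ AffineMap.homothety x₀ (1 - t) '' C) ≤ ENNReal.ofReal (d * t) * μH[d] C := by
  have hsub : AffineMap.homothety x₀ (1 - t) '' C ⊆ C := by
    rintro _ ⟨y, hy, rfl⟩
    rw [AffineMap.homothety_eq_lineMap]
    exact hCv.lineMap_mem hx₀ hy ⟨by linarith, by linarith⟩
  have hmeas := (hC.image (AffineMap.homothety_continuous x₀ (1 - t))).isClosed.measurableSet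
  rw [measure_sdiff hsub hmeas.nullMeasurableSet (ne_top_of_le_ne_top hfin (measure_mono hsub)),
    hausdorffMeasure_homothety_image d.cast_nonneg x₀ (sub_ne_zero.2 ht1.ne'), ENNReal.smul_def,
    smul_eq_mul, tsub_le_iff_right, ← add_mul]
  have bernoulli : 1 ≤ d * t + (1 - t) ^ d := by
    have := one_add_mul_le_pow (a := -t) (by linarith) d
    rw [← sub_eq_add_neg] at this
    linarith
  have hcoe : ((‖1 - t‖₊ ^ (d : ℝ) : ℝ≥0) : ℝ≥0∞) = ENNReal.ofReal ((1 - t) ^ d) := by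
    rw [← ENNReal.ofReal_coe_nnreal, NNReal.coe_rpow, coe_nnnorm, Real.rpow_natCast,
      Real.norm_of_nonneg (by linarith)]
  rw [hcoe, ← ENNReal.ofReal_add (by positivity) (pow_nonneg (by linarith) _)]
  exact le_mul_of_one_le_left' (ENNReal.one_le_ofReal.2 bernoulli)

theorem hausdorffMeasure_diff_iUnion_homothety_eq_zero {E : Type*} [NormedAddCommGroup E]
    [NormedSpace ℝ E] [MeasurableSpace E] [BorelSpace E] {C : Set E} (hC : IsCompact C)
    (hCv : Convex ℝ C) {x₀ : E} (hx₀ : x₀ ∈ C) {d : ℕ} (hfin : μH[d] C ≠ ∞) {t : ℕ → ℝ}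
    (ht0 : ∀ j, 0 ≤ t j) (ht1 : ∀ j, t j < 1) (hlim : Tendsto t atTop (𝓝 0)) :
    μH[d] (C \ ⋃ j, AffineMap.homothety x₀ (1 - t j) '' C) = 0 := by
  have hbound := ENNReal.Tendsto.mul_const (ENNReal.tendsto_ofReal (hlim.const_mul (d : ℝ)))
    (Or.inr hfin)
  rw [mul_zero, ENNReal.ofReal_zero, zero_mul] at hbound
  refine le_antisymm (ge_of_tendsto' hbound fun j => ?_) bot_le
  exact (measure_mono (Set.sdiff_subset_sdiff_right (Set.subset_iUnion _ j))).trans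
    (hausdorffMeasure_diff_homothety_le hC hCv hx₀ hfin (ht0 j) (ht1 j))

theorem setLIntegral_le_of_exhaustion {α : Type*} [MeasurableSpace α] {μ : Measure α}
    {C : Set α} (hC : MeasurableSet C) {H : ℕ → Set α} (hH : ∀ j, MeasurableSet (H j))
    (hnull : μ (C \ ⋃ j, H j) = 0) {f : α → ℝ≥0∞} {a : ℕ → ℝ≥0∞}
    (hf : ∀ j, ∀ x ∈ H j, f x ≤ a j) :
    ∫⁻ x in C, f x ∂μ ≤ a 0 * μ C + ∑' j, a (j + 1) * μ (C \ H j) := by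
  let g : α → ℝ≥0∞ := fun x => a 0 + ∑' j, (C \ H j).indicator (fun _ => a (j + 1)) x
  have hfg : ∀ x ∈ C, ∀ k, x ∈ H k → f x ≤ g x := by
    intro x hxC k
    induction k with
    | zero => exact fun hx => (hf 0 x hx).trans le_self_add
    | succ m ih =>
      intro hx
      by_cases hxm : x ∈ H m
      · exact ih hxm
      · calc f x ≤ (C \ H m).indicator (fun _ => a (m + 1)) x := by
              rw [Set.indicator_of_mem (Set.mem_sdiff_of_mem hxC hxm)]; exact hf _ x hx
          _ ≤ g x := (ENNReal.le_tsum m).trans le_add_self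
  have hae : ∀ᵐ x ∂μ.restrict C, f x ≤ g x := by
    rw [ae_restrict_iff' hC]
    filter_upwards [measure_eq_zero_iff_ae_notMem.1 hnull] with x hx hxC
    obtain ⟨k, hk⟩ := Set.mem_iUnion.1 (not_not.1 fun h => hx ⟨hxC, h⟩)
    exact hfg x hxC k hk
  calc ∫⁻ x in C, f x ∂μ ≤ ∫⁻ x in C, g x ∂μ := lintegral_mono_ae hae
    _ = a 0 * μ C + ∑' j, a (j + 1) * μ (C \ H j) := by
      rw [lintegral_add_left measurable_const, setLIntegral_const,
        lintegral_tsum fun j => (aemeasurable_const.indicator (hC.diff (hH j)))]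
      congr 1
      refine tsum_congr fun j => ?_
      rw [lintegral_indicator_const (hC.diff (hH j)), Measure.restrict_apply (hC.diff (hH j)),
        Set.inter_eq_left.2 Set.sdiff_subset]

namespace ChordDoc

theorem cpow_le_rpow_of_nonneg {a b q : ℝ} (hq : 0 ≤ q) (ha : 0 ≤ a) (hab : a ≤ b) :
    cpow a q ≤ b ^ q := by
  unfold cpow
  split_ifs
  · exact Real.rpow_nonneg (ha.trans hab) q
  · exact Real.rpow_le_rpow ha hab hq

theorem cpow_le_rpow_of_nonpos {a b q : ℝ} (hq : q ≤ 0) (hb : 0 < b) (hba : b ≤ a) :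
    cpow a q ≤ b ^ q := by
  rw [cpow, if_neg (hb.trans_le hba).ne']
  exact Real.rpow_le_rpow_of_nonpos hb hba hq

variable {n : ℕ} {K : Set (Euc n)} {u : Euc n}

def chordSet (K : Set (Euc n)) (u x : Euc n) : Set ℝ := {t | x + t • u ∈ K}

theorem xray_eq_sSup_sub_sInf {x : Euc n} (h : (chordSet K u x).Nonempty) :
    xray K x u = sSup (chordSet K u x) - sInf (chordSet K u x) :=
  if_pos h

theorem isCompact_chordSet (hK : IsCompact K) (hu : u ≠ 0) (x : Euc n) :
    IsCompact (chordSet K u x) :=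
  ((Homeomorph.addLeft x).isClosedEmbedding.comp
    (isClosedEmbedding_smul_left hu)).isCompact_preimage hK

theorem xray_nonneg (hK : IsCompact K) (hu : u ≠ 0) {x : Euc n}
    (h : (chordSet K u x).Nonempty) : 0 ≤ xray K x u := by
  rw [xray_eq_sSup_sub_sInf h, sub_nonneg]
  have hc := isCompact_chordSet hK hu x
  exact csInf_le_csSup h hc.bddBelow hc.bddAbove

theorem xray_le_diam (hK : IsCompact K) (hu : ‖u‖ = 1) {x : Euc n}
    (h : (chordSet K u x).Nonempty) : xray K x u ≤ diam K := by
  have hc := isCompact_chordSet hK (norm_ne_zero_iff.1 (hu.trans_ne one_ne_zero)) x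
  have hdist := dist_le_diam_of_mem hK.isBounded (hc.sSup_mem h) (hc.sInf_mem h)
  rw [dist_add_left, dist_eq_norm, ← sub_smul, norm_smul, hu, mul_one, Real.norm_eq_abs] at hdist
  rw [xray_eq_sSup_sub_sInf h]
  exact (le_abs_self _).trans hdist

theorem two_mul_le_xray (hK : IsCompact K) (hu : ‖u‖ = 1) {x : Euc n} {s r : ℝ} (hr : 0 ≤ r)
    (hball : closedBall (x + s • u) r ⊆ K) : 2 * r ≤ xray K x u := by
  have hc := isCompact_chordSet hK (norm_ne_zero_iff.1 (hu.trans_ne one_ne_zero)) x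
  have hmem : ∀ ε : ℝ, |ε| ≤ r → s + ε ∈ chordSet K u x := fun ε hε => hball <| by
    rw [mem_closedBall, add_smul, ← add_assoc, dist_self_add_left, norm_smul, hu, mul_one,
      Real.norm_eq_abs]
    exact hε
  have hup := le_csSup hc.bddAbove (hmem r (abs_of_nonneg hr).le)
  have hlow := csInf_le hc.bddBelow (hmem (-r) (by rw [abs_neg, abs_of_nonneg hr]))
  rw [xray_eq_sSup_sub_sInf ⟨_, hmem r (abs_of_nonneg hr).le⟩]
  linarith

theorem xray_concave (hK : IsCompact K) (hKv : Convex ℝ K) (hu : u ≠ 0) {x y : Euc n}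
    (hx : (chordSet K u x).Nonempty) (hy : (chordSet K u y).Nonempty) {a b : ℝ}
    (ha : 0 ≤ a) (hb : 0 ≤ b) (hab : a + b = 1) :
    a * xray K x u + b * xray K y u ≤ xray K (a • x + b • y) u := by
  have hcombo : ∀ {s t : ℝ}, s ∈ chordSet K u x → t ∈ chordSet K u y →
      a * s + b * t ∈ chordSet K u (a • x + b • y) := fun {s t} hs ht => by
    have := hKv hs ht ha hb hab
    simp only [chordSet, Set.mem_ofPred_eq] at this ⊢
    convert this using 1
    module
  have hcx := isCompact_chordSet hK hu x
  have hcy := isCompact_chordSet hK hu y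
  have hcz := isCompact_chordSet hK hu (a • x + b • y)
  have hsup := hcombo (hcx.sSup_mem hx) (hcy.sSup_mem hy)
  have hinf := hcombo (hcx.sInf_mem hx) (hcy.sInf_mem hy)
  rw [xray_eq_sSup_sub_sInf hx, xray_eq_sSup_sub_sInf hy, xray_eq_sSup_sub_sInf ⟨_, hsup⟩]
  have := le_csSup hcz.bddAbove hsup
  have := csInf_le hcz.bddBelow hinf
  nlinarith

theorem coe_orthogonalProjectionOnto_orthogonal_singleton (hu : ‖u‖ = 1) (x : Euc n) :
    ((ℝ ∙ u)ᗮ.orthogonalProjectionOnto x : Euc n) = x - ⟪u, x⟫ • u := by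
  rw [← Submodule.starProjection_apply, Submodule.starProjection_orthogonal_val,
    Submodule.starProjection_singleton, hu]
  simp

theorem projHyper_subset_orthogonal : projHyper u K ⊆ (ℝ ∙ u)ᗮ := by
  rintro _ ⟨k, -, rfl⟩
  exact Submodule.coe_mem _

theorem chordSet_nonempty_of_mem_projHyper (hu : ‖u‖ = 1) {x : Euc n}
    (hx : x ∈ projHyper u K) : (chordSet K u x).Nonempty := by
  obtain ⟨k, hk, rfl⟩ := hx
  refine ⟨⟪u, k⟫, ?_⟩
  simpa [chordSet, coe_orthogonalProjectionOnto_orthogonal_singleton hu] using hk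

theorem projHyper_subset_closedBall {R : ℝ} (hKR : K ⊆ closedBall 0 R) :
    projHyper u K ⊆ closedBall 0 R := by
  rintro _ ⟨k, hk, rfl⟩
  rw [mem_closedBall_zero_iff]
  exact (Submodule.norm_starProjection_apply_le _ k).trans (mem_closedBall_zero_iff.1 (hKR hk))

theorem isCompact_projHyper (hK : IsCompact K) : IsCompact (projHyper u K) :=
  hK.image (continuous_subtype_val.comp (ℝ ∙ u)ᗮ.orthogonalProjectionOnto.continuous)

theorem convex_projHyper (hKv : Convex ℝ K) : Convex ℝ (projHyper u K) :=
  hKv.linear_image ((ℝ ∙ u)ᗮ.subtype ∘ₗ (ℝ ∙ u)ᗮ.orthogonalProjectionOnto.toLinearMap)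

theorem mul_xray_le_xray_homothety (hK : IsCompact K) (hKv : Convex ℝ K) (hu : ‖u‖ = 1)
    {x₀ y : Euc n} (hx₀ : x₀ ∈ projHyper u K) (hy : y ∈ projHyper u K) {t : ℝ} (ht0 : 0 ≤ t)
    (ht1 : t ≤ 1) : t * xray K x₀ u ≤ xray K (AffineMap.homothety x₀ (1 - t) y) u := by
  have hu0 : u ≠ 0 := norm_ne_zero_iff.1 (hu.trans_ne one_ne_zero)
  have hne : ∀ x ∈ projHyper u K, (chordSet K u x).Nonempty := fun _ =>
    chordSet_nonempty_of_mem_projHyper hu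
  have hconc := xray_concave hK hKv hu0 (hne x₀ hx₀) (hne y hy) ht0 (sub_nonneg.2 ht1)
    (add_sub_cancel t 1)
  rw [AffineMap.homothety_eq_lineMap, AffineMap.lineMap_apply_module, sub_sub_cancel]
  nlinarith [xray_nonneg hK hu0 (hne y hy)]

theorem setLIntegral_cpow_xray_le_of_nonneg (hK : IsCompact K) (hu : ‖u‖ = 1) {q : ℝ}
    (hq : 0 ≤ q) :
    ∫⁻ x in projHyper u K, ENNReal.ofReal (cpow (xray K x u) q) ∂μH[(n : ℝ) - 1] ≤
      ENNReal.ofReal (diam K ^ q) * μH[(n : ℝ) - 1] (projHyper u K) := by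
  have hu0 : u ≠ 0 := norm_ne_zero_iff.1 (hu.trans_ne one_ne_zero)
  rw [← setLIntegral_const]
  refine setLIntegral_mono' (isCompact_projHyper hK).measurableSet fun x hx => ?_
  have hne := chordSet_nonempty_of_mem_projHyper hu hx
  exact ENNReal.ofReal_le_ofReal <|
    cpow_le_rpow_of_nonneg hq (xray_nonneg hK hu0 hne) (xray_le_diam hK hu hne)

theorem setLIntegral_cpow_xray_le_of_nonpos (hn : 0 < n) (hK : IsCompact K) (hKv : Convex ℝ K)
    (hu : ‖u‖ = 1) {c : Euc n} {r : ℝ} (hr : 0 < r) (hball : closedBall c r ⊆ K) {q : ℝ}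
    (hq : q ≤ 0) (hfin : μH[(n : ℝ) - 1] (projHyper u K) ≠ ∞) :
    ∫⁻ x in projHyper u K, ENNReal.ofReal (cpow (xray K x u) q) ∂μH[(n : ℝ) - 1] ≤
      (ENNReal.ofReal (r ^ q) + ∑' j : ℕ, ENNReal.ofReal ((r * (1 / 2) ^ (j + 1)) ^ q) *
        ENNReal.ofReal (((n : ℝ) - 1) * (1 / 2) ^ (j + 1))) * μH[(n : ℝ) - 1] (projHyper u K) := by
  rw [← Nat.cast_pred hn] at hfin ⊢
  set C := projHyper u K
  set x₀ : Euc n := ((ℝ ∙ u)ᗮ.orthogonalProjectionOnto c : Euc n)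
  have hx₀ : x₀ ∈ C := ⟨c, hball (mem_closedBall_self hr.le), rfl⟩
  have hx₀c : x₀ = c - ⟪u, c⟫ • u := coe_orthogonalProjectionOnto_orthogonal_singleton hu c
  have hX₀ : 2 * r ≤ xray K x₀ u := two_mul_le_xray hK hu hr.le (s := ⟪u, c⟫) <| by
    rwa [hx₀c, sub_add_cancel]
  let t : ℕ → ℝ := fun j => (1 / 2) ^ (j + 1)
  let H : ℕ → Set (Euc n) := fun j => AffineMap.homothety x₀ (1 - t j) '' C
  have ht0 : ∀ j, 0 ≤ t j := fun j => by positivity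
  have ht1 : ∀ j, t j < 1 := fun j => pow_lt_one₀ (by norm_num) (by norm_num) j.succ_ne_zero
  have hbound : ∀ j, ∀ x ∈ H j,
      ENNReal.ofReal (cpow (xray K x u) q) ≤ ENNReal.ofReal ((r * (1 / 2) ^ j) ^ q) := by
    rintro j _ ⟨y, hy, rfl⟩
    refine ENNReal.ofReal_le_ofReal (cpow_le_rpow_of_nonpos hq (by positivity) ?_)
    calc r * (1 / 2) ^ j = t j * (2 * r) := by ring
      _ ≤ t j * xray K x₀ u := by gcongr
      _ ≤ _ := mul_xray_le_xray_homothety hK hKv hu hx₀ hy (ht0 j) (ht1 j).le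
  have hnull : μH[(n - 1 : ℕ)] (C \ ⋃ j, H j) = 0 :=
    hausdorffMeasure_diff_iUnion_homothety_eq_zero (isCompact_projHyper hK) (convex_projHyper hKv)
      hx₀ hfin ht0 ht1 <| (tendsto_pow_atTop_nhds_zero_of_lt_one (by norm_num : (0 : ℝ) ≤ 1 / 2)
        (by norm_num)).comp (tendsto_add_atTop_nat 1)
  have hHmeas : ∀ j, MeasurableSet (H j) := fun j =>
    ((isCompact_projHyper hK).image (AffineMap.homothety_continuous _ _)).measurableSet
  calc ∫⁻ x in C, ENNReal.ofReal (cpow (xray K x u) q) ∂μH[(n - 1 : ℕ)]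
      ≤ ENNReal.ofReal ((r * (1 / 2) ^ 0) ^ q) * μH[(n - 1 : ℕ)] C + ∑' j : ℕ,
          ENNReal.ofReal ((r * (1 / 2) ^ (j + 1)) ^ q) * μH[(n - 1 : ℕ)] (C \ H j) :=
        setLIntegral_le_of_exhaustion (isCompact_projHyper hK).measurableSet hHmeas hnull hbound
    _ ≤ ENNReal.ofReal (r ^ q) * μH[(n - 1 : ℕ)] C + ∑' j : ℕ,
          ENNReal.ofReal ((r * (1 / 2) ^ (j + 1)) ^ q) *
            (ENNReal.ofReal ((n - 1 : ℕ) * (1 / 2) ^ (j + 1)) * μH[(n - 1 : ℕ)] C) := by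
        rw [pow_zero, mul_one]
        gcongr with j
        exact hausdorffMeasure_diff_homothety_le (isCompact_projHyper hK) (convex_projHyper hKv) hx₀
          hfin (ht0 j) (ht1 j)
    _ = _ := by simp only [add_mul, ← ENNReal.tsum_mul_right, mul_assoc]

theorem tsum_ofReal_rpow_mul_geometric_ne_top {r q : ℝ} (hr : 0 < r) (hq : -1 < q) (d : ℝ) :
    ∑' j : ℕ, ENNReal.ofReal ((r * (1 / 2) ^ (j + 1)) ^ q) *
      ENNReal.ofReal (d * (1 / 2) ^ (j + 1)) ≠ ∞ := by
  set ρ : ℝ := (1 / 2) ^ (q + 1)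
  have hρ : ρ < 1 := Real.rpow_lt_one (by norm_num) (by norm_num) (by linarith)
  have hterm : ∀ j : ℕ, ENNReal.ofReal ((r * (1 / 2) ^ (j + 1)) ^ q) *
      ENNReal.ofReal (d * (1 / 2) ^ (j + 1)) =
        ENNReal.ofReal (r ^ q * d) * ENNReal.ofReal ρ ^ (j + 1) := by
    intro j
    have hreal : (r * (1 / 2) ^ (j + 1)) ^ q * (d * (1 / 2) ^ (j + 1)) =
        r ^ q * d * ρ ^ (j + 1) := by
      rw [Real.mul_rpow hr.le (by positivity), ← Real.rpow_pow_comm (by norm_num),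
        show ρ = (1 / 2) ^ q * (1 / 2) from Real.rpow_add_one (by norm_num) q, mul_pow]
      ring
    rw [← ENNReal.ofReal_mul (by positivity), hreal, ENNReal.ofReal_mul' (by positivity),
      ENNReal.ofReal_pow (by positivity)]
  rw [tsum_congr hterm, ENNReal.tsum_mul_left, ENNReal.tsum_geometric_add_one]
  exact ENNReal.mul_ne_top ENNReal.ofReal_ne_top (ENNReal.mul_ne_top ENNReal.ofReal_ne_top
    (ENNReal.inv_ne_top.2 (tsub_pos_of_lt (ENNReal.ofReal_lt_one.2 hρ)).ne'))

theorem exists_setLIntegral_cpow_xray_le (hn : 0 < n) (hK : IsCompact K) (hKv : Convex ℝ K)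
    {c : Euc n} {r : ℝ} (hr : 0 < r) (hball : closedBall c r ⊆ K) {q : ℝ} (hq : -1 < q) :
    ∃ M : ℝ≥0∞, M ≠ ∞ ∧ ∀ u : Euc n, ‖u‖ = 1 → μH[(n : ℝ) - 1] (projHyper u K) ≠ ∞ →
      ∫⁻ x in projHyper u K, ENNReal.ofReal (cpow (xray K x u) q) ∂μH[(n : ℝ) - 1] ≤
        M * μH[(n : ℝ) - 1] (projHyper u K) := by
  rcases le_or_gt 0 q with hq0 | hq0
  · exact ⟨_, ENNReal.ofReal_ne_top, fun u hu _ => setLIntegral_cpow_xray_le_of_nonneg hK hu hq0⟩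
  · exact ⟨_, ENNReal.add_ne_top.2 ⟨ENNReal.ofReal_ne_top,
      tsum_ofReal_rpow_mul_geometric_ne_top hr hq _⟩,
      fun u hu hfin => setLIntegral_cpow_xray_le_of_nonpos hn hK hKv hu hr hball hq0.le hfin⟩

theorem hausdorffMeasure_projHyper_le (hn : 0 < n) (hu : ‖u‖ = 1) {R : ℝ}
    (hKR : K ⊆ closedBall 0 R) :
    μH[(n : ℝ) - 1] (projHyper u K) ≤
      μH[(n - 1 : ℕ)] (closedBall (0 : EuclideanSpace ℝ (Fin (n - 1))) R) := by
  have : Fact (finrank ℝ (Euc n) = (n - 1) + 1) := ⟨by rw [finrank_euclideanSpace_fin]; omega⟩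
  rw [← Nat.cast_pred hn]
  exact hausdorffMeasure_le_of_subset_submodule _
    (Submodule.finrank_orthogonal_span_singleton (norm_ne_zero_iff.1 (hu.trans_ne one_ne_zero)))
    projHyper_subset_orthogonal (projHyper_subset_closedBall hKR)

theorem hausdorffMeasure_sph_lt_top (hn : 0 < n) : μH[(n : ℝ) - 1] (sph n) < ∞ := by
  rw [← Nat.cast_pred hn]
  exact hausdorffMeasure_sphere_lt_top (by rw [finrank_euclideanSpace_fin]; omega)

/-- **Finiteness of chord integrals** (Lemma 3.1). For `q > -1` and every convex body `K`,
the chord integral `I_q(K)` is finite, i.e. the defining iterated integral is finite. -/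
theorem chord_integral_finite
    (n : ℕ) (hn : 2 ≤ n) (q : ℝ) (hq : -1 < q)
    (K : Set (Euc n)) (hK : IsConvexBody K) :
    (∫⁻ u in sph n, (∫⁻ x in projHyper u K,
        ENNReal.ofReal (cpow (xray K x u) q) ∂μH[(n : ℝ) - 1]) ∂μH[(n : ℝ) - 1]) ≠ ∞ := by
  obtain ⟨hKc, hKv, c, hc⟩ := hK
  obtain ⟨r, hr, hball⟩ := nhds_basis_closedBall.mem_iff.1 (mem_interior_iff_mem_nhds.1 hc)
  obtain ⟨R, hKR⟩ := hKc.isBounded.subset_closedBall 0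
  have hn0 : 0 < n := by omega
  obtain ⟨M, hM, hbound⟩ := exists_setLIntegral_cpow_xray_le hn0 hKc hKv hr hball hq
  set V := μH[(n - 1 : ℕ)] (closedBall (0 : EuclideanSpace ℝ (Fin (n - 1))) R)
  have hV : V < ∞ := measure_closedBall_lt_top
  have hdir : ∀ u ∈ sph n, ∫⁻ x in projHyper u K,
      ENNReal.ofReal (cpow (xray K x u) q) ∂μH[(n : ℝ) - 1] ≤ M * V := fun u hu => by
    have hu : ‖u‖ = 1 := mem_sphere_zero_iff_norm.1 hu
    have hproj := hausdorffMeasure_projHyper_le hn0 hu hKR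
    exact (hbound u hu (hproj.trans_lt hV).ne).trans (mul_le_mul_right hproj M)
  refine (lt_of_le_of_lt ?_ (ENNReal.mul_lt_top (ENNReal.mul_lt_top hM.lt_top hV)
    (hausdorffMeasure_sph_lt_top hn0))).ne
  calc _ ≤ ∫⁻ _ in sph n, M * V ∂μH[(n : ℝ) - 1] :=
        setLIntegral_mono' isClosed_sphere.measurableSet hdir
    _ = M * V * μH[(n : ℝ) - 1] (sph n) := setLIntegral_const _ _

end ChordDoc
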